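/- Let Γ be a subgroup of O⁺(1,n) such that ‖A − I‖ ≥ c for all A ∈ Γ with A ≠ I, where c > 0. Then for every r > 0, the set H(r,Γ) = {A ∈ Γ : A(B̄(e₁,r)) ∩ B̄(e₁,r) ≠ ∅} is finite with |H(r,Γ)| ≤ (2κ(r)²(n+1)²/c + 1)^{(n+1)²}, where κ(r) = ((1+cosh r)/sinh r)√(cosh 6r). -/

import Mathlib

open Matrix

noncomputable def opNorm {m : Type*} [Fintype m] [DecidableEq m]
    (A : Matrix m m ℝ) : ℝ :=
  ‖(LinearMap.toContinuousLinearMap (Matrix.toEuclideanLin A))‖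

/-- The Lorentz form matrix `J = diag(-1, 1, …, 1)`. -/
noncomputable def Jmat (n : ℕ) : Matrix (Fin (n+1)) (Fin (n+1)) ℝ :=
  Matrix.diagonal fun i => if i = 0 then (-1 : ℝ) else 1

/-- `A ∈ O⁺(1,n)`: `A` preserves the Lorentz form and the upper sheet. -/
def OPlus {n : ℕ} (A : Matrix (Fin (n+1)) (Fin (n+1)) ℝ) : Prop :=
  Aᵀ * Jmat n * A = Jmat n ∧ 1 ≤ A 0 0

/-- The Lorentzian pairing `x₁y₁ − x₂y₂ − ⋯ − x_{n+1}y_{n+1}`. -/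
noncomputable def lprod {n : ℕ} (x y : Fin (n+1) → ℝ) : ℝ :=
  x 0 * y 0 - ∑ i ∈ Finset.univ.erase 0, x i * y i

/-- Membership in the hyperboloid model `H^n` (upper sheet). -/
def onH {n : ℕ} (x : Fin (n+1) → ℝ) : Prop :=
  lprod x x = 1 ∧ 0 < x 0

/-- Inverse hyperbolic cosine. -/
noncomputable def arcosh (x : ℝ) : ℝ := Real.log (x + Real.sqrt (x ^ 2 - 1))

/-- Hyperbolic distance on the hyperboloid: `cosh (dH x y) = lprod x y`. -/
noncomputable def dH {n : ℕ} (x y : Fin (n+1) → ℝ) : ℝ := arcosh (lprod x y)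

/-- The point `e₁ = (1, 0, …, 0)` of the hyperboloid. -/
noncomputable def e1vec (n : ℕ) : Fin (n+1) → ℝ := fun i => if i = 0 then 1 else 0

/-- The closed hyperbolic ball of radius `r` about `e₁` in the hyperboloid. -/
noncomputable def hBall (n : ℕ) (r : ℝ) : Set (Fin (n+1) → ℝ) :=
  {x | onH x ∧ dH (e1vec n) x ≤ r}

/-- `κ(r) = ((1 + cosh r)/sinh r) √(cosh 6r)`. -/
noncomputable def kappa (r : ℝ) : ℝ :=
  ((1 + Real.cosh r) / Real.sinh r) * Real.sqrt (Real.cosh (6 * r))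

/-!
For `A ∈ H(r, Γ)` pick `x` with `x, Ax ∈ B̄(e₁, r)`; the triangle inequality through `Ax` gives
`d(e₁, Ae₁) ≤ d(e₁, Ax) + d(x, e₁) ≤ 2r`, so `A₀₀ = cosh d(e₁, Ae₁) ≤ cosh 2r ≤ κ(r)`, and the
Lorentz relations bound every entry of `A` by `A₀₀`. Since `H(r, Γ)` is closed under inversion,
for distinct `A, B ∈ H(r, Γ)` the separation `c ≤ ‖AB⁻¹ - I‖ ≤ ‖A - B‖ ‖B⁻¹‖` and the bound
`‖M‖ ≤ (n+1) maxᵢⱼ |Mᵢⱼ|` force some entry of `A - B` to be at least `δ = c / ((n+1)² κ(r))`.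
So distinct elements of `H(r, Γ)` lie in distinct cells of a grid of mesh `δ` on
`[-κ(r), κ(r)]^{(n+1)²}`, and there are at most `(2κ(r)/δ + 1)^{(n+1)²}` such cells.
-/

open Finset

section Lorentz

variable {n : ℕ}

lemma lprod_comm (x y : Fin (n+1) → ℝ) : lprod x y = lprod y x := by
  simp only [lprod, mul_comm]

lemma lprod_self (x : Fin (n+1) → ℝ) :
    lprod x x = x 0 ^ 2 - ∑ i ∈ univ.erase 0, x i ^ 2 := by
  simp only [lprod, sq]

lemma lprod_eq_neg_dotProduct (x y : Fin (n+1) → ℝ) :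
    lprod x y = -(x ⬝ᵥ (Jmat n *ᵥ y)) := by
  simp only [lprod, Jmat, Matrix.mulVec_diagonal, dotProduct]
  rw [← add_sum_erase _ _ (mem_univ 0)]
  have : ∀ i ∈ univ.erase (0 : Fin (n+1)),
      x i * ((if i = 0 then -1 else 1) * y i) = x i * y i := fun i hi => by
    rw [if_neg (ne_of_mem_erase hi), one_mul]
  rw [sum_congr rfl this, if_pos rfl]
  ring

lemma Jmat_mul_Jmat : Jmat n * Jmat n = 1 := by
  rw [Jmat, Matrix.diagonal_mul_diagonal, ← Matrix.diagonal_one]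
  congr 1
  funext i
  split_ifs <;> norm_num

lemma lprod_mulVec {A : Matrix (Fin (n+1)) (Fin (n+1)) ℝ} (hA : Aᵀ * Jmat n * A = Jmat n)
    (x y : Fin (n+1) → ℝ) : lprod (A *ᵥ x) (A *ᵥ y) = lprod x y := by
  rw [lprod_eq_neg_dotProduct, lprod_eq_neg_dotProduct, Matrix.mulVec_mulVec,
    Matrix.dotProduct_mulVec, ← Matrix.vecMul_transpose, Matrix.vecMul_vecMul,
    ← Matrix.mul_assoc, hA, Matrix.dotProduct_mulVec]

lemma Jmat_mul_transpose_mul_Jmat_mul {A : Matrix (Fin (n+1)) (Fin (n+1)) ℝ}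
    (hA : Aᵀ * Jmat n * A = Jmat n) : Jmat n * Aᵀ * Jmat n * A = 1 := by
  calc Jmat n * Aᵀ * Jmat n * A = Jmat n * (Aᵀ * Jmat n * A) := by simp only [Matrix.mul_assoc]
    _ = 1 := by rw [hA, Jmat_mul_Jmat]

lemma isUnit_det_of_transpose_mul_Jmat_mul {A : Matrix (Fin (n+1)) (Fin (n+1)) ℝ}
    (hA : Aᵀ * Jmat n * A = Jmat n) : IsUnit A.det :=
  Matrix.isUnit_det_of_left_inverse (Jmat_mul_transpose_mul_Jmat_mul hA)

lemma mul_Jmat_mul_transpose {A : Matrix (Fin (n+1)) (Fin (n+1)) ℝ}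
    (hA : Aᵀ * Jmat n * A = Jmat n) : A * Jmat n * Aᵀ = Jmat n := by
  have h : A * (Jmat n * Aᵀ * Jmat n) = 1 :=
    mul_eq_one_comm.mp (Jmat_mul_transpose_mul_Jmat_mul hA)
  calc A * Jmat n * Aᵀ = A * (Jmat n * Aᵀ * Jmat n) * Jmat n := by
        simp only [Matrix.mul_assoc, Jmat_mul_Jmat, Matrix.mul_one]
    _ = Jmat n := by rw [h, Matrix.one_mul]

lemma sq_apply_le_sq_apply_zero_sub_lprod (x : Fin (n+1) → ℝ) {i : Fin (n+1)} (hi : i ≠ 0) :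
    x i ^ 2 ≤ x 0 ^ 2 - lprod x x := by
  rw [lprod_self, sub_sub_cancel]
  exact single_le_sum (fun j _ => sq_nonneg (x j)) (mem_erase.mpr ⟨hi, mem_univ i⟩)

lemma sq_apply_le_sq_apply_zero_add_Jmat {A : Matrix (Fin (n+1)) (Fin (n+1)) ℝ}
    (hA : Aᵀ * Jmat n * A = Jmat n) {i : Fin (n+1)} (hi : i ≠ 0) (j : Fin (n+1)) :
    A i j ^ 2 ≤ A 0 j ^ 2 + Jmat n j j := by
  have hcol : lprod (A.col j) (A.col j) = -Jmat n j j := by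
    rw [← Matrix.mulVec_single_one, lprod_mulVec hA, lprod_eq_neg_dotProduct,
      Matrix.mulVec_single_one]
    simp
  simpa [hcol] using sq_apply_le_sq_apply_zero_sub_lprod (A.col j) hi

lemma abs_apply_le_apply_zero_zero {A : Matrix (Fin (n+1)) (Fin (n+1)) ℝ} (hA : OPlus A)
    (i j : Fin (n+1)) : |A i j| ≤ A 0 0 := by
  have hAT : Aᵀᵀ * Jmat n * Aᵀ = Jmat n := by
    rw [Matrix.transpose_transpose, mul_Jmat_mul_transpose hA.1]
  have hJ : ∀ k : Fin (n+1), Jmat n k k = if k = 0 then -1 else 1 := fun k => by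
    simp [Jmat]
  refine abs_le_of_sq_le_sq ?_ (zero_le_one.trans hA.2)
  rcases eq_or_ne i 0 with rfl | hi <;> rcases eq_or_ne j 0 with rfl | hj
  · exact le_rfl
  · have h := sq_apply_le_sq_apply_zero_add_Jmat hAT hj 0
    simp only [hJ, if_true, Matrix.transpose_apply] at h
    linarith
  · have h := sq_apply_le_sq_apply_zero_add_Jmat hA.1 hi 0
    simp only [hJ, if_true] at h
    linarith
  · have h1 := sq_apply_le_sq_apply_zero_add_Jmat hA.1 hi j
    have h2 := sq_apply_le_sq_apply_zero_add_Jmat hAT hj 0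
    simp only [hJ, if_neg hj, if_true, Matrix.transpose_apply] at h1 h2
    linarith

end Lorentz

section Hyperboloid

variable {n : ℕ} {x y : Fin (n+1) → ℝ}

lemma onH.sum_sq_erase_zero (hx : onH x) : ∑ i ∈ univ.erase 0, x i ^ 2 = x 0 ^ 2 - 1 := by
  linarith [lprod_self x ▸ hx.1]

lemma onH.one_le_apply_zero (hx : onH x) : 1 ≤ x 0 := by
  have hsum : 0 ≤ ∑ i ∈ univ.erase 0, x i ^ 2 := sum_nonneg fun i _ => sq_nonneg (x i)
  nlinarith [hx.sum_sq_erase_zero, hx.2]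

lemma onH.apply_zero_mul_sub_le_lprod (hx : onH x) (hy : onH y) :
    x 0 * y 0 - √(x 0 ^ 2 - 1) * √(y 0 ^ 2 - 1) ≤ lprod x y := by
  have hCS := Real.sum_mul_le_sqrt_mul_sqrt (univ.erase 0) x y
  rw [hx.sum_sq_erase_zero, hy.sum_sq_erase_zero] at hCS
  rw [lprod]
  linarith

lemma onH.one_le_lprod (hx : onH x) (hy : onH y) : 1 ≤ lprod x y := by
  have hx0 := hx.one_le_apply_zero
  have hy0 := hy.one_le_apply_zero
  have hsqrt : √(x 0 ^ 2 - 1) * √(y 0 ^ 2 - 1) ≤ x 0 * y 0 - 1 := by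
    rw [← Real.sqrt_mul (by nlinarith), Real.sqrt_le_left]
    · nlinarith [sq_nonneg (x 0 - y 0)]
    · nlinarith
  linarith [hx.apply_zero_mul_sub_le_lprod hy]

lemma onH.cosh_dH (hx : onH x) (hy : onH y) : Real.cosh (dH x y) = lprod x y :=
  Real.cosh_arcosh (hx.one_le_lprod hy)

lemma onH.dH_nonneg (hx : onH x) (hy : onH y) : 0 ≤ dH x y :=
  Real.arcosh_nonneg (hx.one_le_lprod hy)

lemma dH_comm (x y : Fin (n+1) → ℝ) : dH x y = dH y x := by
  rw [dH, dH, lprod_comm]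

lemma dH_mulVec {A : Matrix (Fin (n+1)) (Fin (n+1)) ℝ} (hA : Aᵀ * Jmat n * A = Jmat n)
    (x y : Fin (n+1) → ℝ) : dH (A *ᵥ x) (A *ᵥ y) = dH x y := by
  rw [dH, dH, lprod_mulVec hA]

lemma e1vec_eq_single : e1vec n = Pi.single 0 1 := by
  ext i
  simp [e1vec, Pi.single_apply]

lemma lprod_e1vec_left (x : Fin (n+1) → ℝ) : lprod (e1vec n) x = x 0 := by
  simp [lprod, e1vec]

lemma onH_e1vec : onH (e1vec n) :=
  ⟨lprod_e1vec_left _ ▸ by simp [e1vec], by simp [e1vec]⟩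

lemma mulVec_e1vec (A : Matrix (Fin (n+1)) (Fin (n+1)) ℝ) : A *ᵥ e1vec n = A.col 0 := by
  rw [e1vec_eq_single, Matrix.mulVec_single_one]

lemma dH_e1vec (x : Fin (n+1) → ℝ) : dH (e1vec n) x = Real.arcosh (x 0) := by
  rw [dH, lprod_e1vec_left]
  rfl

-- With a vertex at `e₁` the pairing splits into time coordinates and a Euclidean dot product,
-- so Cauchy–Schwarz is all that is needed.
lemma dH_e1vec_le_add (hx : onH x) (hy : onH y) :
    dH (e1vec n) x ≤ dH (e1vec n) y + dH y x := by
  have hx0 := hx.one_le_apply_zero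
  have hy0 := hy.one_le_apply_zero
  have hcosh : Real.cosh (dH (e1vec n) x - dH (e1vec n) y) ≤ Real.cosh (dH y x) := by
    rw [Real.cosh_sub, dH_e1vec, dH_e1vec, Real.cosh_arcosh hx0, Real.cosh_arcosh hy0,
      Real.sinh_arcosh hx0, Real.sinh_arcosh hy0, hy.cosh_dH hx]
    linarith [hy.apply_zero_mul_sub_le_lprod hx]
  rw [Real.cosh_le_cosh, abs_of_nonneg (hy.dH_nonneg hx)] at hcosh
  linarith [le_abs_self (dH (e1vec n) x - dH (e1vec n) y)]

lemma apply_zero_zero_le_cosh_two_mul {A : Matrix (Fin (n+1)) (Fin (n+1)) ℝ} (hA : OPlus A)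
    {r : ℝ} (hx : x ∈ hBall n r) (hAx : A *ᵥ x ∈ hBall n r) : A 0 0 ≤ Real.cosh (2 * r) := by
  have hAe : onH (A *ᵥ e1vec n) :=
    ⟨by rw [lprod_mulVec hA.1]; exact onH_e1vec.1,
      by rw [mulVec_e1vec]; exact zero_lt_one.trans_le hA.2⟩
  have hdist : dH (e1vec n) (A *ᵥ e1vec n) ≤ 2 * r :=
    calc dH (e1vec n) (A *ᵥ e1vec n)
        ≤ dH (e1vec n) (A *ᵥ x) + dH (A *ᵥ x) (A *ᵥ e1vec n) := dH_e1vec_le_add hAe hAx.1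
      _ = dH (e1vec n) (A *ᵥ x) + dH (e1vec n) x := by rw [dH_mulVec hA.1, dH_comm x]
      _ ≤ 2 * r := by linarith [hx.2, hAx.2]
  have hA00 : A 0 0 = Real.cosh (dH (e1vec n) (A *ᵥ e1vec n)) := by
    rw [onH_e1vec.cosh_dH hAe, lprod_e1vec_left, mulVec_e1vec, Matrix.col_apply]
  rw [hA00, Real.cosh_le_cosh]
  have hd := onH_e1vec.dH_nonneg hAe
  rw [abs_of_nonneg hd, abs_of_nonneg (hd.trans hdist)]
  exact hdist

end Hyperboloid

lemma cosh_two_mul_le_kappa {r : ℝ} (hr : 0 < r) : Real.cosh (2 * r) ≤ kappa r := by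
  have hratio : 1 ≤ (1 + Real.cosh r) / Real.sinh r := by
    rw [one_le_div (Real.sinh_pos_iff.mpr hr)]
    linarith [Real.sinh_lt_cosh r]
  have hcosh4 : Real.cosh (4 * r) = 2 * Real.cosh (2 * r) ^ 2 - 1 := by
    rw [show 4 * r = 2 * (2 * r) by ring, Real.cosh_two_mul, Real.cosh_sq]
    ring
  have hcosh46 : Real.cosh (4 * r) ≤ Real.cosh (6 * r) := by
    rw [Real.cosh_le_cosh, abs_of_pos (by linarith), abs_of_pos (by linarith)]
    linarith
  have hsqrt : Real.cosh (2 * r) ≤ √(Real.cosh (6 * r)) := by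
    rw [Real.le_sqrt (Real.cosh_pos _).le (Real.cosh_pos _).le]
    nlinarith [Real.one_le_cosh (4 * r)]
  calc Real.cosh (2 * r) = 1 * Real.cosh (2 * r) := (one_mul _).symm
    _ ≤ kappa r := mul_le_mul hratio hsqrt (Real.cosh_pos _).le (by linarith)

lemma kappa_pos {r : ℝ} (hr : 0 < r) : 0 < kappa r :=
  (Real.cosh_pos _).trans_le (cosh_two_mul_le_kappa hr)

lemma abs_apply_le_kappa {n : ℕ} {A : Matrix (Fin (n+1)) (Fin (n+1)) ℝ} (hA : OPlus A)
    {r : ℝ} (hr : 0 < r) {x : Fin (n+1) → ℝ} (hx : x ∈ hBall n r) (hAx : A *ᵥ x ∈ hBall n r)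
    (i j : Fin (n+1)) : |A i j| ≤ kappa r :=
  (abs_apply_le_apply_zero_zero hA i j).trans
    ((apply_zero_zero_le_cosh_two_mul hA hx hAx).trans (cosh_two_mul_le_kappa hr))

section OpNorm

variable {m : Type*} [Fintype m] [DecidableEq m]

open scoped Matrix.Norms.L2Operator in
lemma opNorm_mul_le (A B : Matrix m m ℝ) : opNorm (A * B) ≤ opNorm A * opNorm B :=
  Matrix.l2_opNorm_mul A B

lemma opNorm_le_sqrt_sum_sq (A : Matrix m m ℝ) : opNorm A ≤ √(∑ i, ∑ j, A i j ^ 2) := by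
  refine ContinuousLinearMap.opNorm_le_bound _ (Real.sqrt_nonneg _) fun v => ?_
  rw [EuclideanSpace.norm_eq, EuclideanSpace.norm_eq,
    ← Real.sqrt_mul (x := ∑ i, ∑ j, A i j ^ 2) (by positivity)]
  refine Real.sqrt_le_sqrt ?_
  rw [sum_mul]
  refine sum_le_sum fun i _ => ?_
  simpa [Matrix.mulVec, dotProduct, sq_abs] using
    sum_mul_sq_le_sq_mul_sq univ (A i) v

lemma opNorm_le_card_mul {A : Matrix m m ℝ} {K : ℝ} (hK : 0 ≤ K) (hA : ∀ i j, |A i j| ≤ K) :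
    opNorm A ≤ Fintype.card m * K := by
  refine (opNorm_le_sqrt_sum_sq A).trans (Real.sqrt_le_left (by positivity) |>.mpr ?_)
  calc ∑ i, ∑ j, A i j ^ 2 ≤ ∑ _i : m, ∑ _j : m, K ^ 2 :=
        sum_le_sum fun i _ => sum_le_sum fun j _ => sq_le_sq.mpr ((hA i j).trans (le_abs_self K))
    _ = (Fintype.card m * K) ^ 2 := by simp only [sum_const, card_univ, nsmul_eq_mul]; ring

lemma exists_le_abs_apply_of_card_mul_le_opNorm [Nonempty m] {A : Matrix m m ℝ} {δ : ℝ}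
    (hδ : 0 ≤ δ) (h : Fintype.card m * δ ≤ opNorm A) : ∃ i j, δ ≤ |A i j| := by
  have hsum : ∑ _i : m, ∑ _j : m, δ ^ 2 ≤ ∑ i, ∑ j, A i j ^ 2 := by
    have h' := (Real.le_sqrt (by positivity) (by positivity)).mp
      (h.trans (opNorm_le_sqrt_sum_sq A))
    simp only [sum_const, card_univ, nsmul_eq_mul]
    linarith
  obtain ⟨i, -, hi⟩ := exists_le_of_sum_le univ_nonempty hsum
  obtain ⟨j, -, hj⟩ := exists_le_of_sum_le univ_nonempty hi
  exact ⟨i, j, (le_abs_self δ).trans (sq_le_sq.mp hj)⟩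

lemma exists_le_abs_apply_sub_apply [Nonempty m] {A B : Matrix m m ℝ} {c K : ℝ} (hc : 0 ≤ c)
    (hK : 0 < K) (hB : B * B⁻¹ = 1) (hBinv : ∀ i j, |B⁻¹ i j| ≤ K)
    (hsep : c ≤ opNorm (A * B⁻¹ - 1)) :
    ∃ i j, c / (Fintype.card m ^ 2 * K) ≤ |A i j - B i j| := by
  have hN : (0 : ℝ) < Fintype.card m := Nat.cast_pos.mpr Fintype.card_pos
  have hc' : c ≤ opNorm (A - B) * (Fintype.card m * K) :=
    calc c ≤ opNorm ((A - B) * B⁻¹) := by rwa [Matrix.sub_mul, hB]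
      _ ≤ opNorm (A - B) * opNorm B⁻¹ := opNorm_mul_le _ _
      _ ≤ opNorm (A - B) * (Fintype.card m * K) :=
        mul_le_mul_of_nonneg_left (opNorm_le_card_mul hK.le hBinv) (norm_nonneg _)
  refine exists_le_abs_apply_of_card_mul_le_opNorm (by positivity) ?_
  calc Fintype.card m * (c / (Fintype.card m ^ 2 * K)) = c / (Fintype.card m * K) := by
        field_simp
    _ ≤ opNorm (A - B) := by rwa [div_le_iff₀ (by positivity)]

end OpNorm

theorem finite_and_ncard_le_of_separated {ι : Type*} [Fintype ι] {S : Set (ι → ℝ)} {K δ : ℝ}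
    (hK : 0 ≤ K) (hδ : 0 < δ) (hbdd : ∀ x ∈ S, ∀ i, |x i| ≤ K)
    (hsep : ∀ x ∈ S, ∀ y ∈ S, x ≠ y → ∃ i, δ ≤ |x i - y i|) :
    S.Finite ∧ (S.ncard : ℝ) ≤ (2 * K / δ + 1) ^ Fintype.card ι := by
  classical
  set k := ⌊2 * K / δ⌋₊
  let cell : (ι → ℝ) → ι → ℕ := fun x i => ⌊(x i + K) / δ⌋₊
  have hmaps : Set.MapsTo cell S
      (Fintype.piFinset fun _ : ι => range (k + 1) : Set (ι → ℕ)) := fun x hx => by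
    simp only [Fintype.coe_piFinset, Set.mem_pi, Set.mem_univ, coe_range, Set.mem_Iio,
      Nat.lt_succ_iff, forall_const]
    intro i
    exact Nat.floor_mono <|
      div_le_div_of_nonneg_right (by linarith [abs_le.mp (hbdd x hx i)]) hδ.le
  have hcell_nonneg : ∀ x ∈ S, ∀ i, 0 ≤ (x i + K) / δ := fun x hx i =>
    div_nonneg (by linarith [abs_le.mp (hbdd x hx i)]) hδ.le
  have hinj : Set.InjOn cell S := by
    intro x hx y hy hxy
    by_contra hne
    obtain ⟨i, hi⟩ := hsep x hx y hy hne
    have hlt : |(x i + K) / δ - (y i + K) / δ| < 1 := by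
      refine Int.abs_sub_lt_one_of_floor_eq_floor ?_
      rw [← Int.natCast_floor_eq_floor (hcell_nonneg x hx i),
        ← Int.natCast_floor_eq_floor (hcell_nonneg y hy i)]
      exact congrArg _ (congr_fun hxy i)
    rw [← sub_div, add_sub_add_right_eq_sub, abs_div, abs_of_pos hδ, div_lt_one hδ] at hlt
    linarith
  refine ⟨Set.Finite.of_injOn hmaps hinj (finite_toSet _), ?_⟩
  have hcard : S.ncard ≤ (k + 1) ^ Fintype.card ι :=
    calc S.ncard ≤ (Fintype.piFinset fun _ : ι => range (k + 1) : Set (ι → ℕ)).ncard :=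
          Set.ncard_le_ncard_of_injOn cell (fun _ hx => hmaps hx) hinj (finite_toSet _)
      _ = (k + 1) ^ Fintype.card ι := by
          rw [Set.ncard_coe_finset, Fintype.card_piFinset, prod_const, card_range, card_univ]
  calc (S.ncard : ℝ) ≤ ((k : ℝ) + 1) ^ Fintype.card ι := by exact_mod_cast hcard
    _ ≤ (2 * K / δ + 1) ^ Fintype.card ι :=
      pow_le_pow_left₀ (by positivity)
        (by linarith [Nat.floor_le (by positivity : 0 ≤ 2 * K / δ)]) _

theorem Matrix.finite_and_ncard_le_of_separated {m m' : Type*} [Fintype m] [Fintype m']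
    {S : Set (Matrix m m' ℝ)} {K δ : ℝ} (hK : 0 ≤ K) (hδ : 0 < δ)
    (hbdd : ∀ A ∈ S, ∀ i j, |A i j| ≤ K)
    (hsep : ∀ A ∈ S, ∀ B ∈ S, A ≠ B → ∃ i j, δ ≤ |A i j - B i j|) :
    S.Finite ∧ (S.ncard : ℝ) ≤ (2 * K / δ + 1) ^ (Fintype.card m * Fintype.card m') := by
  let entries : Matrix m m' ℝ → m × m' → ℝ := fun A p => A p.1 p.2
  have hinj : Function.Injective entries := fun A B h => Matrix.ext fun i j => congr_fun h (i, j)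
  obtain ⟨hfin, hcard⟩ := _root_.finite_and_ncard_le_of_separated (S := entries '' S) hK hδ
    (by rintro _ ⟨A, hA, rfl⟩ p; exact hbdd A hA p.1 p.2)
    (by
      rintro _ ⟨A, hA, rfl⟩ _ ⟨B, hB, rfl⟩ hAB
      obtain ⟨i, j, hij⟩ := hsep A hA B hB (fun h => hAB (h ▸ rfl))
      exact ⟨(i, j), hij⟩)
  rw [Set.ncard_image_of_injective S hinj, Fintype.card_prod] at hcard
  exact ⟨hfin.of_finite_image hinj.injOn, hcard⟩

theorem stmt_15 (n : ℕ) (c : ℝ) (hc : 0 < c)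
    (Γ : Set (Matrix (Fin (n+1)) (Fin (n+1)) ℝ))
    (hsub : ∀ A ∈ Γ, OPlus A)
    (hmul : ∀ A ∈ Γ, ∀ B ∈ Γ, A * B ∈ Γ)
    (hinv : ∀ A ∈ Γ, A⁻¹ ∈ Γ)
    (hsep : ∀ A ∈ Γ, A ≠ 1 → c ≤ opNorm (A - 1))
    (r : ℝ) (hr : 0 < r) :
    letI H : Set (Matrix (Fin (n+1)) (Fin (n+1)) ℝ) :=
      {A ∈ Γ | ∃ x ∈ hBall n r, A.mulVec x ∈ hBall n r}
    H.Finite ∧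
      (Nat.card H : ℝ) ≤
        (2 * kappa r ^ 2 * (n + 1) ^ 2 / c + 1) ^ ((n + 1) ^ 2) := by
  set H : Set (Matrix (Fin (n+1)) (Fin (n+1)) ℝ) :=
    {A | A ∈ Γ ∧ ∃ x ∈ hBall n r, A *ᵥ x ∈ hBall n r}
  have hκ := kappa_pos hr
  have hunit : ∀ A ∈ Γ, IsUnit A.det := fun A hA =>
    isUnit_det_of_transpose_mul_Jmat_mul (hsub A hA).1
  have hbdd : ∀ A ∈ H, ∀ i j, |A i j| ≤ kappa r := fun A ⟨hAΓ, _, hx, hAx⟩ =>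
    abs_apply_le_kappa (hsub A hAΓ) hr hx hAx
  have hinvH : ∀ A ∈ H, A⁻¹ ∈ H := by
    rintro A ⟨hAΓ, x, hx, hAx⟩
    refine ⟨hinv A hAΓ, A *ᵥ x, hAx, ?_⟩
    rwa [Matrix.mulVec_mulVec, Matrix.nonsing_inv_mul A (hunit A hAΓ), Matrix.one_mulVec]
  have hsepH : ∀ A ∈ H, ∀ B ∈ H, A ≠ B →
      ∃ i j, c / ((n + 1) ^ 2 * kappa r) ≤ |A i j - B i j| := by
    intro A hA B hB hAB
    have hne : A * B⁻¹ ≠ 1 := fun h => hAB <| Eq.symm <| by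
      simpa [h] using Matrix.nonsing_inv_mul_cancel_right B A (hunit B hB.1)
    simpa using exists_le_abs_apply_sub_apply hc.le hκ (Matrix.mul_nonsing_inv B (hunit B hB.1))
      (hbdd _ (hinvH B hB)) (hsep _ (hmul A hA.1 _ (hinv B hB.1)) hne)
  obtain ⟨hfin, hcard⟩ := Matrix.finite_and_ncard_le_of_separated hκ.le
    (by positivity : 0 < c / ((n + 1) ^ 2 * kappa r)) hbdd hsepH
  refine ⟨hfin, ?_⟩
  calc (Nat.card H : ℝ) = H.ncard := by rw [Nat.card_coe_set_eq]
    _ ≤ _ := hcard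
    _ = _ := by
      rw [Fintype.card_fin, ← sq, div_div_eq_mul_div]
      congr 1
      ring
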